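/- Let ψ ∈ Ω∞ and let κ ∈ 𝒦 have restricted growth with respect to ψ (κ ∈ R(ψ)). Then: (i) for every Banach limit L ∈ BL(ℝ₊) there exists a Banach limit L' ∈ BL(ℕ) such that f_{L,κ}(x) = f_{L',κ}(x) for all x ∈ M₊(ψ); and (ii) for every Banach limit L' ∈ BL(ℕ) there exists a Banach limit L ∈ BL(ℝ₊) such that f_{L,κ}(x) = f_{L',κ}(x) for all x ∈ M₊(ψ). -/

import Mathlib

open MeasureTheory Filter Set

noncomputable section

/-- `f` is bounded and continuous on `[0,∞)`, i.e. (the restriction of) `f`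
belongs to `C_b([0,∞))`. -/
def IsCb (f : ℝ → ℝ) : Prop :=
  ContinuousOn f (Ici 0) ∧ ∃ M : ℝ, ∀ t ∈ Ici (0:ℝ), |f t| ≤ M

/-- Bounded real sequences, i.e. elements of `ℓ∞(ℕ)`. -/
def IsBddSeq (a : ℕ → ℝ) : Prop := ∃ M : ℝ, ∀ n, |a n| ≤ M

/-- A Banach limit on `C_b([0,∞))`: a positive linear translation-invariant
functional with `L(1) = 1`.  (The underlying map is defined on all of `ℝ → ℝ`;
the axioms only refer to its values on bounded continuous functions on `[0,∞)`.) -/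
structure BanachLimitR where
  toFun : (ℝ → ℝ) → ℝ
  map_add : ∀ f g : ℝ → ℝ, IsCb f → IsCb g →
    toFun (fun t => f t + g t) = toFun f + toFun g
  map_smul : ∀ (c : ℝ) (f : ℝ → ℝ), IsCb f → toFun (fun t => c * f t) = c * toFun f
  pos : ∀ f : ℝ → ℝ, IsCb f → (∀ t ∈ Ici (0:ℝ), 0 ≤ f t) → 0 ≤ toFun f
  map_one : toFun (fun _ => 1) = 1
  shift_inv : ∀ f : ℝ → ℝ, IsCb f → ∀ s : ℝ, 0 ≤ s → toFun (fun t => f (t + s)) = toFun f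

/-- A Banach limit on `ℓ∞(ℕ)`: a positive linear shift-invariant functional
with `L'(1) = 1`. -/
structure BanachLimitN where
  toFun : (ℕ → ℝ) → ℝ
  map_add : ∀ a b : ℕ → ℝ, IsBddSeq a → IsBddSeq b →
    toFun (fun n => a n + b n) = toFun a + toFun b
  map_smul : ∀ (c : ℝ) (a : ℕ → ℝ), IsBddSeq a → toFun (fun n => c * a n) = c * toFun a
  pos : ∀ a : ℕ → ℝ, IsBddSeq a → (∀ n, 0 ≤ a n) → 0 ≤ toFun a
  map_one : toFun (fun _ => 1) = 1
  shift_inv : ∀ a : ℕ → ℝ, IsBddSeq a → toFun (fun n => a (n + 1)) = toFun a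

/-- An element of `SC_b^*([0,∞))`: a positive linear functional on `C_b([0,∞))`
with `γ(1) = 1` vanishing on `C₀([0,∞))`. -/
structure SCbStar where
  toFun : (ℝ → ℝ) → ℝ
  map_add : ∀ f g : ℝ → ℝ, IsCb f → IsCb g →
    toFun (fun t => f t + g t) = toFun f + toFun g
  map_smul : ∀ (c : ℝ) (f : ℝ → ℝ), IsCb f → toFun (fun t => c * f t) = c * toFun f
  pos : ∀ f : ℝ → ℝ, IsCb f → (∀ t ∈ Ici (0:ℝ), 0 ≤ f t) → 0 ≤ toFun f
  map_one : toFun (fun _ => 1) = 1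
  vanish : ∀ f : ℝ → ℝ, IsCb f → Tendsto f atTop (nhds 0) → toFun f = 0

/-- A positive linear functional on `C_b([0,∞))`. -/
structure PosLinFunc where
  toFun : (ℝ → ℝ) → ℝ
  map_add : ∀ f g : ℝ → ℝ, IsCb f → IsCb g →
    toFun (fun t => f t + g t) = toFun f + toFun g
  map_smul : ∀ (c : ℝ) (f : ℝ → ℝ), IsCb f → toFun (fun t => c * f t) = c * toFun f
  pos : ∀ f : ℝ → ℝ, IsCb f → (∀ t ∈ Ici (0:ℝ), 0 ≤ f t) → 0 ≤ toFun f

/-- `ψ ∈ Ω_∞`: concave on `[0,∞)`, nonnegative, `ψ(t) → 0` as `t → 0⁺` and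
`ψ(t) → ∞` as `t → ∞`. -/
def OmegaInf (ψ : ℝ → ℝ) : Prop :=
  ConcaveOn ℝ (Ici 0) ψ ∧ (∀ t ∈ Ici (0:ℝ), 0 ≤ ψ t) ∧
    Tendsto ψ (nhdsWithin 0 (Ioi 0)) (nhds 0) ∧ Tendsto ψ atTop atTop

/-- The decreasing rearrangement `x*` of a measurable function `x` on `[0,∞)`. -/
def decRearr (x : ℝ → ℝ) (t : ℝ) : ℝ :=
  sInf {s : ℝ | 0 ≤ s ∧ volume {u : ℝ | 0 ≤ u ∧ s < |x u|} ≤ ENNReal.ofReal t}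

/-- The weighted mean function `φ(x)(t) = (1/ψ(t)) ∫₀ᵗ x*(s) ds`. -/
def phiW (ψ x : ℝ → ℝ) (t : ℝ) : ℝ := (∫ s in (0:ℝ)..t, decRearr x s) / ψ t

/-- Membership in the Marcinkiewicz space `M(ψ)`. -/
def MemM (ψ x : ℝ → ℝ) : Prop :=
  Measurable x ∧ ∃ M : ℝ, ∀ t > (0:ℝ), phiW ψ x t ≤ M

/-- Membership in the positive cone `M₊(ψ)`. -/
def MemMplus (ψ x : ℝ → ℝ) : Prop := MemM ψ x ∧ ∀ t ∈ Ici (0:ℝ), 0 ≤ x t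

/-- The Marcinkiewicz norm `‖x‖_{M(ψ)} = sup_{t>0} φ(x)(t)`. -/
def MNorm (ψ x : ℝ → ℝ) : ℝ := ⨆ t > (0:ℝ), phiW ψ x t

/-- `κ ∈ 𝒦`: strictly increasing, invertible (as a map of `[0,∞)` onto itself),
differentiable, unbounded, with `κ(0) = 0`. -/
def MemK (κ : ℝ → ℝ) : Prop :=
  StrictMonoOn κ (Ici 0) ∧ κ 0 = 0 ∧ MapsTo κ (Ici 0) (Ici 0) ∧
    SurjOn κ (Ici 0) (Ici 0) ∧ DifferentiableOn ℝ κ (Ici 0) ∧ Tendsto κ atTop atTop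

/-- `f_{L,κ}(x) = L(φ_κ(x))` for a Banach limit `L` on `C_b([0,∞))`; the function
`φ_κ(x)`, bounded and continuous on `(0,∞)`, is fed to `L` as `t ↦ φ_κ(x)(max t 1)`. -/
def fL (L : BanachLimitR) (ψ κ x : ℝ → ℝ) : ℝ :=
  L.toFun fun t => phiW ψ x (κ (max t 1))

/-- `f_{L',κ}(x) = L'({φ(x)(κ(n))}ₙ)` for a Banach limit `L'` on `ℓ∞(ℕ)`. -/
def fLN (L' : BanachLimitN) (ψ κ x : ℝ → ℝ) : ℝ :=
  L'.toFun fun n => phiW ψ x (κ n)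

/-- `κ` has restricted growth with respect to `ψ` (`κ ∈ R(ψ)`): the sequence
`ψ(κ(n))/ψ(κ(n+1))` is almost convergent to `1`. -/
def RestrictedGrowth (ψ κ : ℝ → ℝ) : Prop :=
  ∀ L' : BanachLimitN, L'.toFun (fun n => ψ (κ n) / ψ (κ ((n:ℝ) + 1))) = 1

/-- `κ` has dominated growth with respect to `ψ` (`κ ∈ D(ψ)`):
`(ψ∘κ)'(t)/(ψ∘κ)(t) < C/t` for some `C > 0` and all `t > 0`. -/
def DominatedGrowth (ψ κ : ℝ → ℝ) : Prop :=
  (∀ t > (0:ℝ), DifferentiableAt ℝ (fun u => ψ (κ u)) t) ∧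
    ∃ C > (0:ℝ), ∀ t > (0:ℝ), deriv (fun u => ψ (κ u)) t / ψ (κ t) < C / t

/-- `κ` is of exponential increase: `κ(t + C) > 2κ(t)` for some `C > 0` and all `t > 0`. -/
def ExpIncrease (κ : ℝ → ℝ) : Prop := ∃ C > (0:ℝ), ∀ t > (0:ℝ), 2 * κ t < κ (t + C)

/-- The piecewise linear extension map `p : ℓ∞(ℕ) → C_b([0,∞))`. -/
def plExt (a : ℕ → ℝ) (t : ℝ) : ℝ :=
  a ⌊t⌋₊ + (a (⌊t⌋₊ + 1) - a ⌊t⌋₊) * (t - (⌊t⌋₊ : ℝ))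

/-- The Cesàro mean `C(g)(μ) = (1/μ) ∫₀^μ g(s) ds` (with `C(g)(0) := g(0)`). -/
def cesaro (g : ℝ → ℝ) (μ : ℝ) : ℝ :=
  if μ = 0 then g 0 else (∫ s in (0:ℝ)..μ, g s) / μ

/-- `M_k(g)(λ) = (1/k(λ)) ∫₀^λ g(s) k'(s) ds` (with `M_k(g)(0) := g(0)`). -/
def MkFun (k g : ℝ → ℝ) (l : ℝ) : ℝ :=
  if l = 0 then g 0 else (∫ s in (0:ℝ)..l, g s * deriv k s) / k l

/-- The Connes-Dixmier functional `τ_{γ,k}(x) = γ(M_k(φ(x)))`; the function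
`M_k(φ(x))`, bounded and continuous on `(0,∞)`, is fed to `γ` as `t ↦ M_k(φ(x))(max t 1)`. -/
def tauCD (γ : SCbStar) (ψ k x : ℝ → ℝ) : ℝ :=
  γ.toFun fun t => MkFun k (phiW ψ x) (max t 1)

/-- A set `Λ` of Banach limits has the Cesàro limit property if for each
`g ∈ C_b([0,∞))` both `liminf C(g)` and `limsup C(g)` are attained as values `L(g)`, `L ∈ Λ`. -/
def CesaroLimitProp (Λ : Set BanachLimitR) : Prop :=
  ∀ g : ℝ → ℝ, IsCb g →
    (∃ L ∈ Λ, L.toFun g = liminf (cesaro g) atTop) ∧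
    (∃ L ∈ Λ, L.toFun g = limsup (cesaro g) atTop)

/-- Dilation invariance of an element of `SC_b^*([0,∞))`. -/
def DilationInvariant (ω : SCbStar) : Prop :=
  ∀ g : ℝ → ℝ, IsCb g → ∀ a : ℝ, 0 < a → ω.toFun (fun t => g (a * t)) = ω.toFun g

/-
On the block `[n, n + 1]` the function `φ_κ(x)` stays close to both `a n = φ(x)(κ(n))` and
`a (n + 1)`: since `∫₀ᵗ x*` and `ψ` increase, the error is at most
`e n = (a (n + 1) - a n) + 2B (1 - ψ(κ(n)) / ψ(κ(n + 1)))`, where `B` bounds `φ(x)`.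
Every Banach limit on `ℓ∞` kills `a (· + 1) - a` by shift invariance and `1 - ψ(κ(·)) / ψ(κ(· + 1))`
by restricted growth, hence kills `e`. So a Banach limit `L` on `C_b([0,∞))` takes the same value
on `φ_κ(x)` as the Banach limit `a ↦ L(p a)` on `a` (`p` the piecewise linear extension), and a
Banach limit `L'` on `ℓ∞` takes the same value on `a` as the Banach limit `f ↦ L'(n ↦ ∫ₙⁿ⁺¹ f)`
on `φ_κ(x)`.
-/

lemma mem_Icc_nat_floor {t : ℝ} (ht : 0 ≤ t) : t ∈ Icc (⌊t⌋₊ : ℝ) (⌊t⌋₊ + 1) :=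
  ⟨Nat.floor_le ht, (Nat.lt_floor_add_one t).le⟩

section ClosureProperties

variable {f g : ℝ → ℝ} {a b : ℕ → ℝ}

lemma IsCb.add (hf : IsCb f) (hg : IsCb g) : IsCb fun t => f t + g t := by
  obtain ⟨hfc, M, hM⟩ := hf
  obtain ⟨hgc, N, hN⟩ := hg
  exact ⟨hfc.add hgc, M + N, fun t ht => (abs_add_le _ _).trans (add_le_add (hM t ht) (hN t ht))⟩

lemma IsCb.sub (hf : IsCb f) (hg : IsCb g) : IsCb fun t => f t - g t := by
  obtain ⟨hfc, M, hM⟩ := hf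
  obtain ⟨hgc, N, hN⟩ := hg
  exact ⟨hfc.sub hgc, M + N, fun t ht => (abs_sub _ _).trans (add_le_add (hM t ht) (hN t ht))⟩

lemma IsCb.comp_add_right (hf : IsCb f) {s : ℝ} (hs : 0 ≤ s) : IsCb fun t => f (t + s) := by
  obtain ⟨hfc, M, hM⟩ := hf
  exact ⟨hfc.comp (continuous_add_const s).continuousOn fun t ht => add_nonneg ht hs, M,
    fun t ht => hM _ (add_nonneg ht hs)⟩

lemma IsCb.intervalIntegrable (hf : IsCb f) {a b : ℝ} (ha : 0 ≤ a) (hb : 0 ≤ b) :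
    IntervalIntegrable f volume a b :=
  (hf.1.mono fun _ ht => (le_min ha hb).trans ht.1).intervalIntegrable

lemma IsCb.isBddSeq_integral (hf : IsCb f) {s : ℝ} (hs : 0 ≤ s) :
    IsBddSeq fun n : ℕ => ∫ t in (n : ℝ)..n + s, f t := by
  obtain ⟨M, hM⟩ := hf.2
  refine ⟨M * s, fun n => ?_⟩
  have h := intervalIntegral.norm_integral_le_of_norm_le_const (a := (n : ℝ)) (b := n + s)
    (C := M) (f := f) fun t ht => by
      rw [uIoc_of_le (by linarith)] at ht
      exact hM t (n.cast_nonneg.trans ht.1.le)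
  simpa [abs_of_nonneg hs] using h

lemma IsBddSeq.add (ha : IsBddSeq a) (hb : IsBddSeq b) : IsBddSeq fun n => a n + b n := by
  obtain ⟨M, hM⟩ := ha
  obtain ⟨N, hN⟩ := hb
  exact ⟨M + N, fun n => (abs_add_le _ _).trans (add_le_add (hM n) (hN n))⟩

lemma IsBddSeq.sub (ha : IsBddSeq a) (hb : IsBddSeq b) : IsBddSeq fun n => a n - b n := by
  obtain ⟨M, hM⟩ := ha
  obtain ⟨N, hN⟩ := hb
  exact ⟨M + N, fun n => (abs_sub _ _).trans (add_le_add (hM n) (hN n))⟩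

lemma IsBddSeq.const (c : ℝ) : IsBddSeq fun _ => c := ⟨|c|, fun _ => le_rfl⟩

lemma IsBddSeq.const_mul (ha : IsBddSeq a) (c : ℝ) : IsBddSeq fun n => c * a n := by
  obtain ⟨M, hM⟩ := ha
  exact ⟨|c| * M, fun n =>
    (abs_mul c (a n)).trans_le (mul_le_mul_of_nonneg_left (hM n) (abs_nonneg c))⟩

lemma IsBddSeq.comp (ha : IsBddSeq a) (g : ℕ → ℕ) : IsBddSeq fun n => a (g n) := by
  obtain ⟨M, hM⟩ := ha
  exact ⟨M, fun n => hM (g n)⟩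

end ClosureProperties

namespace BanachLimitR

variable (L : BanachLimitR) {f g h : ℝ → ℝ}

lemma map_sub (hf : IsCb f) (hg : IsCb g) :
    L.toFun (fun t => f t - g t) = L.toFun f - L.toFun g := by
  have hsum := L.map_add (fun t => f t - g t) g (hf.sub hg) hg
  simp only [sub_add_cancel] at hsum
  linarith

lemma abs_map_le (hf : IsCb f) (hh : IsCb h) (hfh : ∀ t ∈ Ici (0 : ℝ), |f t| ≤ h t) :
    |L.toFun f| ≤ L.toFun h := by
  have h₁ := L.pos _ (hh.sub hf) fun t ht => sub_nonneg.2 (le_of_abs_le (hfh t ht))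
  have h₂ := L.pos _ (hh.add hf) fun t ht => by linarith [neg_abs_le (f t), hfh t ht]
  rw [L.map_sub hh hf] at h₁
  rw [L.map_add h f hh hf] at h₂
  exact abs_le.2 ⟨by linarith, by linarith⟩

lemma map_congr (hf : IsCb f) (hg : IsCb g) (hfg : ∀ t ∈ Ici (0 : ℝ), f t = g t) :
    L.toFun f = L.toFun g := by
  have h₁ := L.pos _ (hf.sub hg) fun t ht => by simp [hfg t ht]
  have h₂ := L.pos _ (hg.sub hf) fun t ht => by simp [hfg t ht]
  rw [L.map_sub hf hg] at h₁
  rw [L.map_sub hg hf] at h₂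
  linarith

end BanachLimitR

namespace BanachLimitN

variable (L : BanachLimitN) {a b e : ℕ → ℝ}

lemma map_sub (ha : IsBddSeq a) (hb : IsBddSeq b) :
    L.toFun (fun n => a n - b n) = L.toFun a - L.toFun b := by
  have hsum := L.map_add (fun n => a n - b n) b (ha.sub hb) hb
  simp only [sub_add_cancel] at hsum
  linarith

lemma abs_map_le (ha : IsBddSeq a) (he : IsBddSeq e) (hae : ∀ n, |a n| ≤ e n) :
    |L.toFun a| ≤ L.toFun e := by
  have h₁ := L.pos _ (he.sub ha) fun n => sub_nonneg.2 (le_of_abs_le (hae n))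
  have h₂ := L.pos _ (he.add ha) fun n => by linarith [neg_abs_le (a n), hae n]
  rw [L.map_sub he ha] at h₁
  rw [L.map_add e a he ha] at h₂
  exact abs_le.2 ⟨by linarith, by linarith⟩

lemma map_sub_shift (ha : IsBddSeq a) : L.toFun (fun n => a (n + 1) - a n) = 0 := by
  rw [L.map_sub (ha.comp _) ha, L.shift_inv a ha, sub_self]

end BanachLimitN

/-- `e` is almost convergent to `0`. -/
def IsAlmostNull (e : ℕ → ℝ) : Prop := ∀ L : BanachLimitN, L.toFun e = 0

def AlmostAgrees (f : ℝ → ℝ) (a : ℕ → ℝ) : Prop :=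
  ∃ e : ℕ → ℝ, IsBddSeq e ∧ IsAlmostNull e ∧
    ∀ n : ℕ, ∀ t ∈ Icc (n : ℝ) (n + 1), |f t - a n| ≤ e n ∧ |f t - a (n + 1)| ≤ e n

section PiecewiseLinear

variable (a b : ℕ → ℝ)

lemma plExt_add : plExt (fun n => a n + b n) = fun t => plExt a t + plExt b t := by
  funext t; simp only [plExt]; ring

lemma plExt_const_mul (c : ℝ) : plExt (fun n => c * a n) = fun t => c * plExt a t := by
  funext t; simp only [plExt]; ring

lemma plExt_const (c : ℝ) : plExt (fun _ => c) = fun _ => c := by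
  funext t; simp [plExt]

lemma plExt_comp_add_one {t : ℝ} (ht : 0 ≤ t) :
    plExt (fun n => a (n + 1)) t = plExt a (t + 1) := by
  simp only [plExt, Nat.floor_add_one ht]
  push_cast
  ring

lemma plExt_eq_of_mem_Icc {n : ℕ} {t : ℝ} (ht : t ∈ Icc (n : ℝ) (n + 1)) :
    plExt a t = a n + (a (n + 1) - a n) * (t - n) := by
  rcases ht.2.eq_or_lt with rfl | hlt
  · have : ⌊(n : ℝ) + 1⌋₊ = n + 1 := by exact_mod_cast Nat.floor_natCast (R := ℝ) (n + 1)
    simp only [plExt, this]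
    push_cast
    ring
  · simp only [plExt, (Nat.floor_eq_iff (n.cast_nonneg.trans ht.1)).2 ⟨ht.1, hlt⟩]

lemma plExt_mem_uIcc {t : ℝ} (ht : 0 ≤ t) :
    plExt a t ∈ uIcc (a ⌊t⌋₊) (a (⌊t⌋₊ + 1)) := by
  have hθ := mem_Icc_nat_floor ht
  rw [← segment_eq_uIcc]
  exact ⟨1 - (t - ⌊t⌋₊), t - ⌊t⌋₊, by linarith [hθ.2], by linarith [hθ.1], by ring,
    by simp only [plExt, smul_eq_mul]; ring⟩

lemma continuousOn_plExt : ContinuousOn (plExt a) (Ici 0) := by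
  have hcover : ⋃ n : ℕ, Icc (n : ℝ) (n + 1) = Ici 0 := by
    ext t
    simp only [mem_iUnion, mem_Ici]
    exact ⟨fun ⟨n, hn⟩ => n.cast_nonneg.trans hn.1, fun ht => ⟨_, mem_Icc_nat_floor ht⟩⟩
  have hlf : LocallyFinite fun n : ℕ => Icc (n : ℝ) (n + 1) := by
    have hbot : Tendsto (fun m : ℤ => (m : ℝ)) atBot atBot :=
      tendsto_atBot_atBot.2 fun b => ⟨⌊b⌋, fun m hm => (Int.cast_le.2 hm).trans (Int.floor_le b)⟩
    simpa [Function.comp_def] using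
      (locallyFinite_Icc_of_tendsto tendsto_intCast_atTop_atTop
        (tendsto_atBot_add_const_right _ 1 hbot)).comp_injective Nat.cast_injective
  rw [← hcover]
  exact hlf.continuousOn_iUnion (fun _ => isClosed_Icc) fun n =>
    (Continuous.continuousOn (by fun_prop)).congr fun t ht => plExt_eq_of_mem_Icc a ht

variable {a}

lemma abs_sub_plExt_le {y c t : ℝ} (ht : 0 ≤ t) (h₀ : |y - a ⌊t⌋₊| ≤ c)
    (h₁ : |y - a (⌊t⌋₊ + 1)| ≤ c) : |y - plExt a t| ≤ c := by
  obtain ⟨h₀, h₀'⟩ := abs_sub_le_iff.1 h₀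
  obtain ⟨h₁, h₁'⟩ := abs_sub_le_iff.1 h₁
  have hmem := uIcc_subset_Icc (a₂ := y - c) (b₂ := y + c) ⟨by linarith, by linarith⟩
    ⟨by linarith, by linarith⟩ (plExt_mem_uIcc a ht)
  exact abs_sub_le_iff.2 ⟨by linarith [hmem.1], by linarith [hmem.2]⟩

lemma isCb_plExt (ha : IsBddSeq a) : IsCb (plExt a) := by
  obtain ⟨M, hM⟩ := ha
  exact ⟨continuousOn_plExt a, M, fun t ht =>
    abs_le.2 (uIcc_subset_Icc (abs_le.1 (hM _)) (abs_le.1 (hM _)) (plExt_mem_uIcc a ht))⟩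

end PiecewiseLinear

def BanachLimitR.toBanachLimitN (L : BanachLimitR) : BanachLimitN where
  toFun a := L.toFun (plExt a)
  map_add a b ha hb := by
    rw [plExt_add]
    exact L.map_add _ _ (isCb_plExt ha) (isCb_plExt hb)
  map_smul c a ha := by
    rw [plExt_const_mul]
    exact L.map_smul c _ (isCb_plExt ha)
  pos a ha ha₀ := L.pos _ (isCb_plExt ha) fun t ht =>
    (le_min (ha₀ _) (ha₀ _)).trans (plExt_mem_uIcc a ht).1
  map_one := by rw [plExt_const, L.map_one]
  shift_inv a ha := by
    rw [L.map_congr (isCb_plExt (ha.comp _)) ((isCb_plExt ha).comp_add_right zero_le_one)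
      fun t ht => plExt_comp_add_one a ht]
    exact L.shift_inv _ (isCb_plExt ha) 1 zero_le_one

lemma IsCb.integral_comp_add_right {f : ℝ → ℝ} (hf : IsCb f) {a s : ℝ} (ha : 0 ≤ a)
    (hs : 0 ≤ s) :
    ∫ t in a..a + 1, f (t + s) =
      (∫ t in a..a + 1, f t) + ((∫ t in a + 1..a + 1 + s, f t) - ∫ t in a..a + s, f t) := by
  have hint : ∀ b c : ℝ, a ≤ b → a ≤ c → IntervalIntegrable f volume b c := fun b c hb hc =>
    hf.intervalIntegrable (ha.trans hb) (ha.trans hc)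
  rw [intervalIntegral.integral_comp_add_right f s]
  have h₁ := intervalIntegral.integral_add_adjacent_intervals
    (hint a (a + s) le_rfl (by linarith)) (hint (a + s) (a + 1 + s) (by linarith) (by linarith))
  have h₂ := intervalIntegral.integral_add_adjacent_intervals
    (hint a (a + 1) le_rfl (by linarith)) (hint (a + 1) (a + 1 + s) (by linarith) (by linarith))
  linarith

def BanachLimitN.toBanachLimitR (L : BanachLimitN) : BanachLimitR where
  toFun f := L.toFun fun n => ∫ t in (n : ℝ)..n + 1, f t
  map_add f g hf hg := by
    rw [← L.map_add _ _ (hf.isBddSeq_integral zero_le_one) (hg.isBddSeq_integral zero_le_one)]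
    congr 1
    funext n
    exact intervalIntegral.integral_add (hf.intervalIntegrable n.cast_nonneg (by positivity))
      (hg.intervalIntegrable n.cast_nonneg (by positivity))
  map_smul c f hf := by
    simp only [intervalIntegral.integral_const_mul]
    exact L.map_smul c _ (hf.isBddSeq_integral zero_le_one)
  pos f hf hf₀ := L.pos _ (hf.isBddSeq_integral zero_le_one) fun n =>
    intervalIntegral.integral_nonneg (by linarith) fun t ht => hf₀ t (n.cast_nonneg.trans ht.1)
  map_one := by simp [L.map_one]
  shift_inv f hf s hs := by
    have hG := hf.isBddSeq_integral hs
    have hG₁ : IsBddSeq fun n : ℕ => ∫ t in (n : ℝ) + 1..n + 1 + s, f t := by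
      simpa using hG.comp (· + 1)
    have hshift := L.map_sub_shift hG
    push_cast at hshift
    simp only [hf.integral_comp_add_right (Nat.cast_nonneg _) hs]
    rw [L.map_add _ _ (hf.isBddSeq_integral zero_le_one) (hG₁.sub hG), hshift, add_zero]

namespace AlmostAgrees

variable {f : ℝ → ℝ} {a : ℕ → ℝ}

lemma map_eq_toBanachLimitN (h : AlmostAgrees f a) (hf : IsCb f) (ha : IsBddSeq a)
    (L : BanachLimitR) : L.toFun f = L.toBanachLimitN.toFun a := by
  obtain ⟨e, he, he₀, hfa⟩ := h
  have he_nonneg : ∀ n : ℕ, 0 ≤ e n := fun n =>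
    (abs_nonneg _).trans (hfa n n ⟨le_rfl, by linarith⟩).1
  -- `e ⌊t⌋₊` bounds `|f t - plExt a t|` but is not continuous; `plExt w` is a continuous majorant.
  set w : ℕ → ℝ := fun n => e (n - 1) + e n
  have hw : IsBddSeq w := (he.comp _).add he
  have hw₀ : L.toBanachLimitN.toFun w = 0 := by
    have hshift := L.toBanachLimitN.shift_inv _ (he.comp (· - 1))
    simp only [Nat.add_sub_cancel] at hshift
    rw [L.toBanachLimitN.map_add _ _ (he.comp _) he, ← hshift, he₀, add_zero]
  have hbound : ∀ t ∈ Ici (0 : ℝ), |f t - plExt a t| ≤ plExt w t := by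
    intro t ht
    obtain ⟨h₀, h₁⟩ := hfa _ t (mem_Icc_nat_floor ht)
    calc |f t - plExt a t| ≤ e ⌊t⌋₊ := abs_sub_plExt_le ht h₀ h₁
      _ ≤ plExt w t := by
          refine (le_min ?_ ?_).trans (plExt_mem_uIcc w ht).1
          · exact le_add_of_nonneg_left (he_nonneg _)
          · simp only [w, Nat.add_sub_cancel]
            exact le_add_of_nonneg_right (he_nonneg _)
  have h := L.abs_map_le (hf.sub (isCb_plExt ha)) (isCb_plExt hw) hbound
  rw [L.map_sub hf (isCb_plExt ha)] at h
  exact sub_eq_zero.1 (abs_nonpos_iff.1 (h.trans_eq hw₀))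

lemma toBanachLimitR_map_eq (h : AlmostAgrees f a) (hf : IsCb f) (ha : IsBddSeq a)
    (L : BanachLimitN) : L.toBanachLimitR.toFun f = L.toFun a := by
  obtain ⟨e, he, he₀, hfa⟩ := h
  have hc := hf.isBddSeq_integral zero_le_one
  have hbound : ∀ n : ℕ, |(∫ t in (n : ℝ)..n + 1, f t) - a n| ≤ e n := by
    intro n
    have hn : (0 : ℝ) ≤ n := n.cast_nonneg
    calc |(∫ t in (n : ℝ)..n + 1, f t) - a n| = ‖∫ t in (n : ℝ)..n + 1, (f t - a n)‖ := by
          rw [intervalIntegral.integral_sub (hf.intervalIntegrable hn (by linarith))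
            intervalIntegrable_const]
          simp
      _ ≤ e n * |(n : ℝ) + 1 - n| :=
          intervalIntegral.norm_integral_le_of_norm_le_const fun t ht => by
            rw [uIoc_of_le (by linarith)] at ht
            exact (hfa n t (Ioc_subset_Icc_self ht)).1
      _ = e n := by simp
  have h := L.abs_map_le (hc.sub ha) he hbound
  rw [L.map_sub hc ha, he₀ L] at h
  exact sub_eq_zero.1 (abs_nonpos_iff.1 h)

end AlmostAgrees

lemma ConcaveOn.monotoneOn_of_tendsto_atTop {f : ℝ → ℝ} {c : ℝ} (hf : ConcaveOn ℝ (Ici c) f)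
    (htop : Tendsto f atTop atTop) : MonotoneOn f (Ici c) := by
  intro u hu v hv huv
  by_contra! hvu
  obtain ⟨w, hvw, hw⟩ := ((eventually_ge_atTop v).and (htop.eventually_gt_atTop (f v))).exists
  exact (lt_min hvu hw).not_ge (hf.min_le_of_mem_Icc hu (mem_Ici.2 (hv.trans hvw)) ⟨huv, hvw⟩)

lemma ConcaveOn.pos_of_tendsto_atTop {f : ℝ → ℝ} {c t : ℝ} (hf : ConcaveOn ℝ (Ici c) f)
    (hc : 0 ≤ f c) (htop : Tendsto f atTop atTop) (ht : c < t) : 0 < f t := by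
  by_contra! hft
  obtain ⟨w, htw, hw⟩ := ((eventually_gt_atTop t).and (htop.eventually_gt_atTop (f t))).exists
  have hmono := hf.strictMonoOn (mem_Ici.2 (ht.le.trans htw.le)) htw hw
  linarith [hmono ⟨self_mem_Ici, ht.le⟩ ⟨mem_Ici.2 ht.le, self_mem_Iic⟩ ht]

section OmegaInfMemK

variable {ψ κ : ℝ → ℝ} {t : ℝ}

lemma OmegaInf.monotoneOn (hψ : OmegaInf ψ) : MonotoneOn ψ (Ici 0) :=
  hψ.1.monotoneOn_of_tendsto_atTop hψ.2.2.2

lemma OmegaInf.pos (hψ : OmegaInf ψ) (ht : 0 < t) : 0 < ψ t :=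
  hψ.1.pos_of_tendsto_atTop (hψ.2.1 0 self_mem_Ici) hψ.2.2.2 ht

lemma OmegaInf.continuousOn (hψ : OmegaInf ψ) : ContinuousOn ψ (Ioi 0) := by
  simpa using hψ.1.continuousOn_interior

lemma MemK.pos (hκ : MemK κ) (ht : 0 < t) : 0 < κ t :=
  hκ.2.1 ▸ hκ.1 self_mem_Ici ht.le ht

lemma MemK.nonneg (hκ : MemK κ) (ht : 0 ≤ t) : 0 ≤ κ t := hκ.2.2.1 ht

lemma MemK.monotoneOn (hκ : MemK κ) : MonotoneOn κ (Ici 0) := hκ.1.monotoneOn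

lemma MemK.continuousOn (hκ : MemK κ) : ContinuousOn κ (Ici 0) :=
  hκ.2.2.2.2.1.continuousOn

end OmegaInfMemK

section Primitive

variable {g : ℝ → ℝ}

/- The decreasing rearrangement vanishes up to some point and is antitone from there on (`hg`),
but need not be integrable near that point. The junk value `0` of non-integrable integrals then
still leaves the primitive monotone and continuous on `(0, ∞)`. -/
lemma integral_eq_zero_of_not_intervalIntegrable (hg : ∀ v, g v ≠ 0 → AntitoneOn g (Ici v))
    {s t : ℝ} (hs : 0 ≤ s) (hst : s ≤ t) (ht : ¬IntervalIntegrable g volume 0 t) :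
    ∫ u in (0 : ℝ)..s, g u = 0 := by
  by_contra hne
  have hint : IntervalIntegrable g volume 0 s := by
    by_contra h
    exact hne (intervalIntegral.integral_undef h)
  obtain ⟨v, hv, hgv⟩ : ∃ v ∈ Icc 0 s, g v ≠ 0 := by
    by_contra! h
    refine hne ((intervalIntegral.integral_congr (g := fun _ => 0) fun u hu => ?_).trans (by simp))
    exact h u (by rwa [uIcc_of_le hs] at hu)
  refine ht (hint.trans ((hg v hgv).mono ?_).intervalIntegrable)
  rw [uIcc_of_le hst]
  exact fun u hu => hv.2.trans hu.1

lemma monotoneOn_integral (hg₀ : ∀ u, 0 ≤ g u) (hg : ∀ v, g v ≠ 0 → AntitoneOn g (Ici v)) :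
    MonotoneOn (fun t => ∫ u in (0 : ℝ)..t, g u) (Ici 0) := by
  intro s hs t ht hst
  by_cases hint : IntervalIntegrable g volume 0 t
  · have h₁ := hint.mono_set (uIcc_subset_uIcc left_mem_uIcc (mem_uIcc_of_le hs hst))
    have h₂ := hint.mono_set (uIcc_subset_uIcc (mem_uIcc_of_le hs hst) right_mem_uIcc)
    simp only [← intervalIntegral.integral_add_adjacent_intervals h₁ h₂]
    exact le_add_of_nonneg_right (intervalIntegral.integral_nonneg hst fun u _ => hg₀ u)
  · simp only [intervalIntegral.integral_undef hint,
      integral_eq_zero_of_not_intervalIntegrable hg hs hst hint, le_refl]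

lemma continuousAt_integral (hg : ∀ v, g v ≠ 0 → AntitoneOn g (Ici v)) {t₀ : ℝ} (ht₀ : 0 < t₀) :
    ContinuousAt (fun t => ∫ u in (0 : ℝ)..t, g u) t₀ := by
  by_cases hint : IntervalIntegrable g volume 0 (t₀ + 1)
  · have h := intervalIntegral.continuousOn_primitive_interval' hint left_mem_uIcc
    rw [uIcc_of_le (by linarith)] at h
    exact h.continuousAt (Icc_mem_nhds ht₀ (lt_add_one t₀))
  · refine continuousAt_const.congr (f := fun _ => (0 : ℝ)) ?_
    filter_upwards [Ioo_mem_nhds ht₀ (lt_add_one t₀)] with t ht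
    exact (integral_eq_zero_of_not_intervalIntegrable hg ht.1.le ht.2.le hint).symm

end Primitive

lemma decRearr_nonneg (x : ℝ → ℝ) (t : ℝ) : 0 ≤ decRearr x t :=
  Real.sInf_nonneg fun _ hs => hs.1

lemma antitoneOn_decRearr (x : ℝ → ℝ) {v : ℝ} (hv : decRearr x v ≠ 0) :
    AntitoneOn (decRearr x) (Ici v) := by
  have hne : {s : ℝ | 0 ≤ s ∧ volume {u : ℝ | 0 ≤ u ∧ s < |x u|} ≤ ENNReal.ofReal v}.Nonempty := by
    by_contra h
    exact hv (by rw [decRearr, not_nonempty_iff_eq_empty.1 h, Real.sInf_empty])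
  intro u hu w _ huw
  exact csInf_le_csInf ⟨0, fun s hs => hs.1⟩
    (hne.mono fun s hs => ⟨hs.1, hs.2.trans (ENNReal.ofReal_le_ofReal hu)⟩)
    fun s hs => ⟨hs.1, hs.2.trans (ENNReal.ofReal_le_ofReal huw)⟩

section Phi

variable {ψ κ x : ℝ → ℝ} {B : ℝ}

lemma phiW_zero (ψ x : ℝ → ℝ) : phiW ψ x 0 = 0 := by
  simp [phiW]

lemma MemM.exists_phiW_le (hx : MemM ψ x) : ∃ B, ∀ t ≥ 0, phiW ψ x t ≤ B := by
  obtain ⟨-, M, hM⟩ := hx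
  refine ⟨max M 0, fun t ht => ?_⟩
  rcases ht.eq_or_lt with rfl | ht
  · rw [phiW_zero]
    exact le_max_right _ _
  · exact (hM t ht).trans (le_max_left _ _)

lemma integral_decRearr_nonneg (x : ℝ → ℝ) {t : ℝ} (ht : 0 ≤ t) :
    0 ≤ ∫ s in (0 : ℝ)..t, decRearr x s :=
  intervalIntegral.integral_nonneg ht fun s _ => decRearr_nonneg x s

lemma phiW_nonneg (hψ : OmegaInf ψ) (x : ℝ → ℝ) {t : ℝ} (ht : 0 ≤ t) : 0 ≤ phiW ψ x t :=
  div_nonneg (integral_decRearr_nonneg x ht) (hψ.2.1 t ht)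

lemma continuousOn_phiW (hψ : OmegaInf ψ) (x : ℝ → ℝ) : ContinuousOn (phiW ψ x) (Ioi 0) :=
  fun t ht => ((continuousAt_integral (fun _ => antitoneOn_decRearr x) ht).continuousWithinAt).div
    (hψ.continuousOn t ht) (hψ.pos ht).ne'

lemma phiW_mul_div_le (hψ : OmegaInf ψ) (x : ℝ → ℝ) {p u v q : ℝ} (hp : 0 ≤ p) (hpu : p ≤ u)
    (huv : u ≤ v) (hvq : v ≤ q) : phiW ψ x u * (ψ p / ψ q) ≤ phiW ψ x v := by
  rcases (hp.trans hpu).eq_or_lt with rfl | hu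
  · rw [phiW_zero, zero_mul]
    exact phiW_nonneg hψ x huv
  set I := fun t => ∫ s in (0 : ℝ)..t, decRearr x s
  have hmono := monotoneOn_integral (decRearr_nonneg x) fun _ => antitoneOn_decRearr x
  have hv := hu.trans_le huv
  have hIu : 0 ≤ I u := integral_decRearr_nonneg x hu.le
  have hψq : ψ v ≤ ψ q := hψ.monotoneOn hv.le (hv.le.trans hvq) hvq
  calc phiW ψ x u * (ψ p / ψ q) = I u / ψ q * (ψ p / ψ u) := by simp only [phiW, I]; ring
    _ ≤ I u / ψ q :=
        mul_le_of_le_one_right (div_nonneg hIu ((hψ.pos hv).le.trans hψq))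
          (div_le_one_of_le₀ (hψ.monotoneOn hp hu.le hpu) (hψ.pos hu).le)
    _ ≤ I v / ψ q := by
        gcongr
        · exact (hψ.pos hv).le.trans hψq
        · exact hmono hu.le hv.le huv
    _ ≤ I v / ψ v := div_le_div_of_nonneg_left (integral_decRearr_nonneg x hv.le) (hψ.pos hv) hψq

lemma phiW_sub_le (hψ : OmegaInf ψ) (x : ℝ → ℝ) {p u v q : ℝ} (hp : 0 ≤ p) (hpu : p ≤ u)
    (huv : u ≤ v) (hvq : v ≤ q) (hq : 0 < q) (hB : phiW ψ x u ≤ B) :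
    phiW ψ x u - phiW ψ x v ≤ B * (1 - ψ p / ψ q) := by
  have hr : ψ p / ψ q ≤ 1 :=
    div_le_one_of_le₀ (hψ.monotoneOn hp hq.le (hpu.trans (huv.trans hvq))) (hψ.pos hq).le
  have h := phiW_mul_div_le hψ x hp hpu huv hvq
  nlinarith [mul_le_mul_of_nonneg_right hB (sub_nonneg.2 hr)]

lemma isBddSeq_phiW_comp (hψ : OmegaInf ψ) (hκ : MemK κ) (hB : ∀ t ≥ 0, phiW ψ x t ≤ B) :
    IsBddSeq fun n : ℕ => phiW ψ x (κ n) := by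
  refine ⟨B, fun n => abs_le.2 ⟨?_, hB _ (hκ.nonneg n.cast_nonneg)⟩⟩
  linarith [phiW_nonneg hψ x (hκ.nonneg n.cast_nonneg), hB _ (hκ.nonneg n.cast_nonneg)]

lemma isCb_phiW_comp (hψ : OmegaInf ψ) (hκ : MemK κ) (hB : ∀ t ≥ 0, phiW ψ x t ≤ B) :
    IsCb fun t => phiW ψ x (κ (max t 1)) := by
  have hpos : ∀ t, 0 < κ (max t 1) := fun t => hκ.pos (lt_max_of_lt_right one_pos)
  refine ⟨(continuousOn_phiW hψ x).comp (hκ.continuousOn.comp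
    (continuous_id.max continuous_const).continuousOn fun t _ => ?_) fun t _ => hpos t,
    B, fun t _ => abs_le.2 ⟨?_, hB _ (hpos t).le⟩⟩
  · exact mem_Ici.2 (zero_le_one.trans (le_max_right t 1))
  · linarith [phiW_nonneg hψ x (hpos t).le, hB _ (hpos t).le]

lemma psi_comp_div_mem_Icc (hψ : OmegaInf ψ) (hκ : MemK κ) (n : ℕ) :
    ψ (κ n) / ψ (κ ((n : ℝ) + 1)) ∈ Icc (0 : ℝ) 1 := by
  have hq : 0 < κ ((n : ℝ) + 1) := hκ.pos (by positivity)
  refine ⟨div_nonneg (hψ.2.1 _ (hκ.nonneg n.cast_nonneg)) (hψ.pos hq).le,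
    div_le_one_of_le₀ (hψ.monotoneOn (hκ.nonneg n.cast_nonneg) hq.le ?_) (hψ.pos hq).le⟩
  exact hκ.monotoneOn (mem_Ici.2 n.cast_nonneg) (by positivity : (0 : ℝ) ≤ n + 1) (by linarith)

lemma isBddSeq_psi_comp_div (hψ : OmegaInf ψ) (hκ : MemK κ) :
    IsBddSeq fun n : ℕ => ψ (κ n) / ψ (κ ((n : ℝ) + 1)) := by
  refine ⟨1, fun n => abs_le.2 ⟨?_, (psi_comp_div_mem_Icc hψ hκ n).2⟩⟩
  linarith [(psi_comp_div_mem_Icc hψ hκ n).1]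

/- `blockError` contains the signed increment of `n ↦ φ(x)(κ(n))`, which Banach limits kill, not
its absolute value: by `phiW_sub_le` its drops are at most `B (1 - ψ(κ(n)) / ψ(κ(n + 1)))`. -/
def blockError (ψ κ x : ℝ → ℝ) (B : ℝ) (n : ℕ) : ℝ :=
  (phiW ψ x (κ (n + 1 : ℕ)) - phiW ψ x (κ n)) + 2 * B * (1 - ψ (κ n) / ψ (κ ((n : ℝ) + 1)))

lemma isBddSeq_blockError (hψ : OmegaInf ψ) (hκ : MemK κ) (hB : ∀ t ≥ 0, phiW ψ x t ≤ B) :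
    IsBddSeq (blockError ψ κ x B) :=
  let ha := isBddSeq_phiW_comp hψ hκ hB
  ((ha.comp _).sub ha).add (((IsBddSeq.const 1).sub (isBddSeq_psi_comp_div hψ hκ)).const_mul _)

lemma isAlmostNull_blockError (hψ : OmegaInf ψ) (hκ : MemK κ) (hR : RestrictedGrowth ψ κ)
    (hB : ∀ t ≥ 0, phiW ψ x t ≤ B) : IsAlmostNull (blockError ψ κ x B) := by
  intro L
  have ha := isBddSeq_phiW_comp hψ hκ hB
  have hr := isBddSeq_psi_comp_div hψ hκ
  unfold blockError
  rw [L.map_add _ _ ((ha.comp _).sub ha) (((IsBddSeq.const 1).sub hr).const_mul _),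
    L.map_sub_shift ha, L.map_smul _ _ ((IsBddSeq.const 1).sub hr),
    L.map_sub (IsBddSeq.const 1) hr, L.map_one, hR L]
  ring

lemma abs_phiW_comp_sub_le (hψ : OmegaInf ψ) (hκ : MemK κ) (hB : ∀ t ≥ 0, phiW ψ x t ≤ B)
    {n : ℕ} {t : ℝ} (ht : t ∈ Icc (n : ℝ) (n + 1)) :
    |phiW ψ x (κ (max t 1)) - phiW ψ x (κ n)| ≤ blockError ψ κ x B n ∧
      |phiW ψ x (κ (max t 1)) - phiW ψ x (κ (n + 1 : ℕ))| ≤ blockError ψ κ x B n := by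
  have hn : (0 : ℝ) ≤ n := n.cast_nonneg
  have hu : max t 1 ∈ Icc (n : ℝ) (n + 1) :=
    ⟨ht.1.trans (le_max_left _ _), max_le ht.2 (by linarith)⟩
  have hp := hκ.nonneg hn
  have hq : 0 < κ ((n : ℝ) + 1) := hκ.pos (by positivity)
  have hpu := hκ.monotoneOn (mem_Ici.2 hn) (mem_Ici.2 (hn.trans hu.1)) hu.1
  have huq := hκ.monotoneOn (mem_Ici.2 (hn.trans hu.1)) (by positivity : (0 : ℝ) ≤ n + 1) hu.2
  have h₁ := phiW_sub_le hψ x hp le_rfl hpu huq hq (hB _ hp)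
  have h₂ := phiW_sub_le hψ x hp hpu huq le_rfl hq (hB _ (hp.trans hpu))
  have h₃ := phiW_sub_le hψ x hp le_rfl (hpu.trans huq) le_rfl hq (hB _ hp)
  have hδ := mul_nonneg (phiW_zero ψ x ▸ hB 0 le_rfl)
    (sub_nonneg.2 (psi_comp_div_mem_Icc hψ hκ n).2)
  rw [blockError]
  push_cast
  exact ⟨abs_le.2 ⟨by linarith, by linarith⟩, abs_le.2 ⟨by linarith, by linarith⟩⟩

lemma almostAgrees_phiW_comp (hψ : OmegaInf ψ) (hκ : MemK κ) (hR : RestrictedGrowth ψ κ)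
    (hB : ∀ t ≥ 0, phiW ψ x t ≤ B) :
    AlmostAgrees (fun t => phiW ψ x (κ (max t 1))) fun n => phiW ψ x (κ n) :=
  ⟨blockError ψ κ x B, isBddSeq_blockError hψ hκ hB, isAlmostNull_blockError hψ hκ hR hB,
    fun _ _ ht => abs_phiW_comp_sub_le hψ hκ hB ht⟩

end Phi

/-- for `κ ∈ R(ψ)` the families `{f_{L,κ} : L ∈ BL(ℝ₊)}` and
`{f_{L',κ} : L' ∈ BL(ℕ)}` coincide as functionals on `M₊(ψ)`. -/
theorem fL_eq_fLN_families (ψ κ : ℝ → ℝ) (hψ : OmegaInf ψ) (hκ : MemK κ)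
    (hR : RestrictedGrowth ψ κ) :
    (∀ L : BanachLimitR, ∃ L' : BanachLimitN,
      ∀ x : ℝ → ℝ, MemMplus ψ x → fL L ψ κ x = fLN L' ψ κ x) ∧
    (∀ L' : BanachLimitN, ∃ L : BanachLimitR,
      ∀ x : ℝ → ℝ, MemMplus ψ x → fL L ψ κ x = fLN L' ψ κ x) := by
  refine ⟨fun L => ⟨L.toBanachLimitN, fun x hx => ?_⟩,
    fun L' => ⟨L'.toBanachLimitR, fun x hx => ?_⟩⟩ <;>
  obtain ⟨B, hB⟩ := hx.1.exists_phiW_le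
  · exact (almostAgrees_phiW_comp hψ hκ hR hB).map_eq_toBanachLimitN
      (isCb_phiW_comp hψ hκ hB) (isBddSeq_phiW_comp hψ hκ hB) L
  · exact (almostAgrees_phiW_comp hψ hκ hR hB).toBanachLimitR_map_eq
      (isCb_phiW_comp hψ hκ hB) (isBddSeq_phiW_comp hψ hκ hB) L'
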